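/- arXiv:1902.03901 — 3 statements merged into one kernel-verified Lean document; each statement's English description precedes it below -/
import Mathlib

section
/- Let m > 0. The matrix-valued function φ is smooth on ℝ³∖{0} and is annihilated there by the free Dirac operator: for every x ∈ ℝ³∖{0}, −i Σ_{j=1}^3 α_j (∂_j φ)(x) + m β φ(x) = 0, where ∂_j φ is the entrywise partial derivative and the Dirac matrices multiply φ on the left. -/
open Matrix

/-- The Pauli matrices `σ₁, σ₂, σ₃`. -/
noncomputable def pauli : Fin 3 → Matrix (Fin 2) (Fin 2) ℂ
  | 0 => !![0, 1; 1, 0]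
  | 1 => !![0, -Complex.I; Complex.I, 0]
  | 2 => !![1, 0; 0, -1]

/-- The Dirac matrices `α₁, α₂, α₃`, given in 2×2 blocks by `α_j = [[0, σ_j], [σ_j, 0]]`. -/
noncomputable def diracAlpha : Fin 3 → Matrix (Fin 4) (Fin 4) ℂ
  | 0 => !![0, 0, 0, 1;
            0, 0, 1, 0;
            0, 1, 0, 0;
            1, 0, 0, 0]
  | 1 => !![0, 0, 0, -Complex.I;
            0, 0, Complex.I, 0;
            0, -Complex.I, 0, 0;
            Complex.I, 0, 0, 0]
  | 2 => !![0, 0, 1, 0;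
            0, 0, 0, -1;
            1, 0, 0, 0;
            0, -1, 0, 0]

/-- The Dirac matrix `β = [[I₂, 0], [0, -I₂]]`. -/
noncomputable def diracBeta : Matrix (Fin 4) (Fin 4) ℂ :=
  !![1, 0, 0, 0;
     0, 1, 0, 0;
     0, 0, -1, 0;
     0, 0, 0, -1]

/-- For `p ∈ ℝ³`, the matrix `α·p = Σ_j p_j α_j`. -/
noncomputable def alphaDot (p : EuclideanSpace ℝ (Fin 3)) : Matrix (Fin 4) (Fin 4) ℂ :=
  ∑ j : Fin 3, (p j : ℂ) • diracAlpha j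


/-- The fundamental solution `φ` of the free Dirac operator `D = -i α·∇ + m β`:
`φ(x) = (e^{-m|x|}/(4π|x|)) (m β + (1 + m|x|) i (α·x)/|x|²)` for `x ≠ 0`. -/
noncomputable def phiFund (m : ℝ) (x : EuclideanSpace ℝ (Fin 3)) : Matrix (Fin 4) (Fin 4) ℂ :=
  ((Real.exp (-(m * ‖x‖)) / (4 * Real.pi * ‖x‖) : ℝ) : ℂ) •
    ((m : ℂ) • diracBeta +
      (((1 + m * ‖x‖) / ‖x‖ ^ 2 : ℝ) : ℂ) • (Complex.I • alphaDot x))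

/-- The entrywise partial derivative `∂_j φ` of the fundamental solution. -/
noncomputable def phiFundPartial (m : ℝ) (j : Fin 3) (x : EuclideanSpace ℝ (Fin 3)) :
    Matrix (Fin 4) (Fin 4) ℂ :=
  Matrix.of fun a b => fderiv ℝ (fun y => phiFund m y a b) x (EuclideanSpace.single j 1)


/-! ### Auxiliary material -/

local notation "E3" => EuclideanSpace ℝ (Fin 3)

/-- generic matrix of the `α·x` shape -/
noncomputable def mADirac (a b c : ℂ) : Matrix (Fin 4) (Fin 4) ℂ :=
  !![0, 0, c, a - Complex.I*b;
     0, 0, a + Complex.I*b, -c;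
     c, a - Complex.I*b, 0, 0;
     a + Complex.I*b, -c, 0, 0]

set_option maxHeartbeats 1000000 in
lemma mADirac_sq (a b c : ℂ) : mADirac a b c * mADirac a b c = (a^2+b^2+c^2) • 1 := by
  ext i j
  fin_cases i <;> fin_cases j <;>
    · simp [mADirac, Matrix.mul_apply, Fin.sum_univ_four, Matrix.one_apply,
        Matrix.vecHead, Matrix.vecTail]
      try ring_nf
      try simp [Complex.I_sq]
      try ring

set_option maxHeartbeats 1000000 in
lemma diracBeta_mADirac (a b c : ℂ) :
    diracBeta * mADirac a b c = -(mADirac a b c * diracBeta) := by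
  ext i j
  fin_cases i <;> fin_cases j <;>
    · simp [mADirac, diracBeta, Matrix.mul_apply, Fin.sum_univ_four,
        Matrix.vecHead, Matrix.vecTail]
      try ring

set_option maxHeartbeats 1000000 in
lemma diracBeta_sq : diracBeta * diracBeta = 1 := by
  ext i j
  fin_cases i <;> fin_cases j <;>
    · simp [diracBeta, Matrix.mul_apply, Fin.sum_univ_four, Matrix.one_apply,
        Matrix.vecHead, Matrix.vecTail]

lemma diracAlpha_zero_eq : diracAlpha 0 = mADirac 1 0 0 := by
  ext i j
  fin_cases i <;> fin_cases j <;> norm_num [diracAlpha, mADirac]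

lemma diracAlpha_one_eq : diracAlpha 1 = mADirac 0 1 0 := by
  ext i j
  fin_cases i <;> fin_cases j <;> norm_num [diracAlpha, mADirac]

lemma diracAlpha_two_eq : diracAlpha 2 = mADirac 0 0 1 := by
  ext i j
  fin_cases i <;> fin_cases j <;> norm_num [diracAlpha, mADirac]

lemma diracAlpha_sq (j : Fin 3) : diracAlpha j * diracAlpha j = 1 := by
  fin_cases j
  · rw [show diracAlpha ⟨0, by norm_num⟩ = mADirac 1 0 0 from diracAlpha_zero_eq, mADirac_sq]
    norm_num
  · rw [show diracAlpha ⟨1, by norm_num⟩ = mADirac 0 1 0 from diracAlpha_one_eq, mADirac_sq]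
    norm_num
  · rw [show diracAlpha ⟨2, by norm_num⟩ = mADirac 0 0 1 from diracAlpha_two_eq, mADirac_sq]
    norm_num

lemma alphaDot_eq (x : E3) : alphaDot x = mADirac (x 0) (x 1) (x 2) := by
  rw [alphaDot, Fin.sum_univ_three, diracAlpha_zero_eq, diracAlpha_one_eq, diracAlpha_two_eq]
  ext i j
  fin_cases i <;> fin_cases j <;>
    · simp [mADirac, Matrix.add_apply, Matrix.smul_apply, smul_eq_mul,
        Matrix.vecHead, Matrix.vecTail]
      try ring

lemma norm_sq_eq_sum3 (x : E3) : (‖x‖:ℝ)^2 = (x 0)^2 + (x 1)^2 + (x 2)^2 := by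
  rw [EuclideanSpace.norm_eq, Real.sq_sqrt (by positivity)]
  rw [Fin.sum_univ_three]
  simp [Real.norm_eq_abs, sq_abs]

lemma alphaDot_sq (x : E3) : alphaDot x * alphaDot x = ((‖x‖^2 : ℝ) : ℂ) • 1 := by
  rw [alphaDot_eq, mADirac_sq]
  congr 1
  push_cast [norm_sq_eq_sum3]
  ring

lemma diracBeta_alphaDot (x : E3) :
    diracBeta * alphaDot x = -(alphaDot x * diracBeta) := by
  rw [alphaDot_eq]; exact diracBeta_mADirac _ _ _

/-! ### Radial scalar functions -/

noncomputable def uA (m t : ℝ) : ℝ := m * Real.exp (-(m*t)) / (4*Real.pi*t)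
noncomputable def vA (m t : ℝ) : ℝ := Real.exp (-(m*t)) * (1+m*t) / (4*Real.pi*t^3)
noncomputable def uA' (m t : ℝ) : ℝ := -(m * vA m t * t)
noncomputable def vA' (m t : ℝ) : ℝ :=
  -(m^2 * Real.exp (-(m*t)) / (4*Real.pi*t^2)) - 3 * vA m t / t

lemma hasDerivAt_uA (m : ℝ) {t : ℝ} (ht : t ≠ 0) : HasDerivAt (uA m) (uA' m t) t := by
  have h1 : HasDerivAt (fun s : ℝ => -(m*s)) (-m) t := by
    simpa using ((hasDerivAt_id t).const_mul (-m))
  have h2 : HasDerivAt (fun s : ℝ => m * Real.exp (-(m*s)))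
      (m * (Real.exp (-(m*t)) * -m)) t := (h1.exp).const_mul m
  have h3 : HasDerivAt (fun s : ℝ => 4*Real.pi*s) (4*Real.pi) t := by
    simpa using ((hasDerivAt_id t).const_mul (4*Real.pi))
  have h4 := h2.div h3 (by positivity)
  refine h4.congr_deriv ?_
  simp only [uA', uA, vA]
  have hπ := Real.pi_ne_zero
  field_simp
  ring

lemma hasDerivAt_vA (m : ℝ) {t : ℝ} (ht : t ≠ 0) : HasDerivAt (vA m) (vA' m t) t := by
  have h1 : HasDerivAt (fun s : ℝ => -(m*s)) (-m) t := by
    simpa using ((hasDerivAt_id t).const_mul (-m))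
  have h1' : HasDerivAt (fun s : ℝ => 1 + m*s) m t := by
    simpa using (((hasDerivAt_id t).const_mul m).const_add 1)
  have h2 : HasDerivAt (fun s : ℝ => Real.exp (-(m*s)) * (1+m*s))
      ((Real.exp (-(m*t)) * -m) * (1+m*t) + Real.exp (-(m*t)) * m) t := (h1.exp).mul h1'
  have h3 : HasDerivAt (fun s : ℝ => 4*Real.pi*s^3) (4*Real.pi*(3*t^2)) t := by
    simpa using ((hasDerivAt_pow 3 t).const_mul (4*Real.pi))
  have h4 := h2.div h3 (by positivity)
  refine h4.congr_deriv ?_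
  simp only [vA', vA]
  have hπ := Real.pi_ne_zero
  field_simp
  ring

lemma odeRel (m : ℝ) {t : ℝ} (ht : t ≠ 0) :
    vA' m t * t + 3 * vA m t + m * uA m t = 0 := by
  simp only [vA', vA, uA]
  have hπ := Real.pi_ne_zero
  field_simp
  ring

lemma hasFDerivAt_norm3 (x : E3) (hx : x ≠ 0) :
    HasFDerivAt (fun y : E3 => ‖y‖) (‖x‖⁻¹ • innerSL ℝ x) x := by
  have hs : (0:ℝ) < ‖x‖ := norm_pos_iff.2 hx
  have h2 : HasFDerivAt (fun y : E3 => ‖y‖^2) ((2:ℕ) • innerSL ℝ x) x :=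
    (hasStrictFDerivAt_norm_sq x).hasFDerivAt
  have h3 := (Real.hasDerivAt_sqrt (by positivity : ‖x‖^2 ≠ 0)).comp_hasFDerivAt x h2
  have heq : (fun y : E3 => ‖y‖) = fun y : E3 => Real.sqrt (‖y‖^2) := by
    funext y; rw [Real.sqrt_sq (norm_nonneg y)]
  rw [heq]
  have hL : (1 / (2 * Real.sqrt (‖x‖ ^ 2))) • ((2:ℕ) • innerSL ℝ x)
      = ‖x‖⁻¹ • innerSL ℝ x := by
    ext y
    rw [Real.sqrt_sq hs.le]
    simp only [ContinuousLinearMap.smul_apply, two_smul, smul_eq_mul,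
      ContinuousLinearMap.add_apply]
    field_simp
    ring
  exact hL ▸ h3

/-! ### Entrywise formulas and derivatives -/

/-- the linear part of an entry of `alphaDot` as a CLM -/
noncomputable def GabCLM (a b : Fin 4) : E3 →L[ℝ] ℂ :=
  ∑ k : Fin 3, diracAlpha k a b • (Complex.ofRealCLM.comp (EuclideanSpace.proj k))

lemma GabCLM_apply (a b : Fin 4) (y : E3) : GabCLM a b y = alphaDot y a b := by
  simp only [GabCLM, alphaDot, ContinuousLinearMap.coe_sum', Finset.sum_apply,
    ContinuousLinearMap.smul_apply, ContinuousLinearMap.coe_comp', Function.comp_apply,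
    Complex.ofRealCLM_apply, Matrix.sum_apply, Matrix.smul_apply]
  exact Finset.sum_congr rfl fun k _ => by simp [smul_eq_mul]; ring

lemma GabCLM_single (a b : Fin 4) (j : Fin 3) :
    GabCLM a b (EuclideanSpace.single j 1) = diracAlpha j a b := by
  simp only [GabCLM, ContinuousLinearMap.coe_sum', Finset.sum_apply,
    ContinuousLinearMap.smul_apply, ContinuousLinearMap.coe_comp', Function.comp_apply,
    Complex.ofRealCLM_apply]
  rw [Fin.sum_univ_three]
  fin_cases j <;>
    simp [EuclideanSpace.proj, EuclideanSpace.single_apply, smul_eq_mul]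

lemma phiFund_apply' (m : ℝ) (x : E3) (hx : x ≠ 0) (a b : Fin 4) :
    phiFund m x a b =
      (uA m ‖x‖ : ℂ) * diracBeta a b + (vA m ‖x‖ : ℂ) * (Complex.I * alphaDot x a b) := by
  have hr : ‖x‖ ≠ 0 := norm_ne_zero_iff.2 hx
  have hπ : (Real.pi : ℂ) ≠ 0 := by exact_mod_cast Real.pi_ne_zero
  have hrC : (‖x‖ : ℂ) ≠ 0 := by exact_mod_cast hr
  simp only [phiFund, uA, vA, Matrix.smul_apply, Matrix.add_apply, smul_eq_mul]
  push_cast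
  field_simp

lemma phiFund_eq (m : ℝ) (x : E3) (hx : x ≠ 0) :
    phiFund m x = ((uA m ‖x‖ : ℝ) : ℂ) • diracBeta
      + ((vA m ‖x‖ : ℝ) : ℂ) • (Complex.I • alphaDot x) := by
  ext a b
  rw [phiFund_apply' m x hx a b]
  simp [Matrix.add_apply, Matrix.smul_apply, smul_eq_mul]
  try ring

lemma entry_hasFDerivAt (m : ℝ) (x : E3) (hx : x ≠ 0) (a b : Fin 4) :
    HasFDerivAt (fun y => phiFund m y a b)
      (diracBeta a b • (Complex.ofRealCLM.comp (uA' m ‖x‖ • (‖x‖⁻¹ • innerSL ℝ x)))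
        + ((Complex.I * alphaDot x a b) •
            (Complex.ofRealCLM.comp (vA' m ‖x‖ • (‖x‖⁻¹ • innerSL ℝ x)))
          + ((vA m ‖x‖ : ℂ)) • (Complex.I • GabCLM a b))) x := by
  have hr : ‖x‖ ≠ 0 := norm_ne_zero_iff.2 hx
  have hN := hasFDerivAt_norm3 x hx
  have hU : HasFDerivAt (fun y : E3 => ((uA m ‖y‖ : ℝ) : ℂ))
      (Complex.ofRealCLM.comp (uA' m ‖x‖ • (‖x‖⁻¹ • innerSL ℝ x))) x :=
    Complex.ofRealCLM.hasFDerivAt.comp x (((hasDerivAt_uA m hr).comp_hasFDerivAt x hN))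
  have hV : HasFDerivAt (fun y : E3 => ((vA m ‖y‖ : ℝ) : ℂ))
      (Complex.ofRealCLM.comp (vA' m ‖x‖ • (‖x‖⁻¹ • innerSL ℝ x))) x :=
    Complex.ofRealCLM.hasFDerivAt.comp x (((hasDerivAt_vA m hr).comp_hasFDerivAt x hN))
  have hG : HasFDerivAt (fun y : E3 => Complex.I * alphaDot y a b)
      (Complex.I • GabCLM a b) x := by
    have h0 : HasFDerivAt (fun y : E3 => (GabCLM a b) y) (GabCLM a b) x :=
      (GabCLM a b).hasFDerivAt
    have h1 : HasFDerivAt (fun y : E3 => Complex.I * (GabCLM a b) y)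
        (Complex.I • GabCLM a b) x := by
      simpa using h0.const_mul Complex.I
    refine h1.congr_of_eventuallyEq (Filter.Eventually.of_forall fun y => ?_)
    simp only [GabCLM_apply]
  have hmain : HasFDerivAt
      (fun y : E3 => (uA m ‖y‖ : ℂ) * diracBeta a b
        + (vA m ‖y‖ : ℂ) * (Complex.I * alphaDot y a b))
      (diracBeta a b • (Complex.ofRealCLM.comp (uA' m ‖x‖ • (‖x‖⁻¹ • innerSL ℝ x)))
        + (((vA m ‖x‖ : ℝ):ℂ) • (Complex.I • GabCLM a b)
          + (Complex.I * alphaDot x a b) •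
              (Complex.ofRealCLM.comp (vA' m ‖x‖ • (‖x‖⁻¹ • innerSL ℝ x))))) x :=
    (hU.mul_const (diracBeta a b)).add (hV.mul hG)
  rw [add_comm ((Complex.I * alphaDot x a b) • _)]
  refine hmain.congr_of_eventuallyEq ?_
  have hopen : {y : E3 | y ≠ 0} ∈ nhds x :=
    IsOpen.mem_nhds (isOpen_compl_singleton) hx
  filter_upwards [hopen] with y hy
  rw [phiFund_apply' m y hy a b]

lemma phiFundPartial_eq (m : ℝ) (x : E3) (hx : x ≠ 0) (j : Fin 3) :
    phiFundPartial m j x =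
      ((uA' m ‖x‖ * (x j / ‖x‖) : ℝ) : ℂ) • diracBeta
        + ((vA' m ‖x‖ * (x j / ‖x‖) : ℝ) : ℂ) • (Complex.I • alphaDot x)
        + ((vA m ‖x‖ : ℝ) : ℂ) • (Complex.I • diracAlpha j) := by
  have hinner : (innerSL ℝ x) (EuclideanSpace.single j 1) = x j := by
    simp [EuclideanSpace.inner_single_right]
  ext a b
  rw [phiFundPartial, Matrix.of_apply, (entry_hasFDerivAt m x hx a b).fderiv]
  simp only [ContinuousLinearMap.add_apply, ContinuousLinearMap.smul_apply,
    ContinuousLinearMap.coe_comp', Function.comp_apply, ContinuousLinearMap.coe_smul',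
    Pi.smul_apply, Complex.ofRealCLM_apply, hinner, GabCLM_single,
    Matrix.add_apply, Matrix.smul_apply, smul_eq_mul]
  push_cast
  ring

/-! ### Smoothness -/

lemma uA_contDiffAt (m : ℝ) {t : ℝ} (ht : t ≠ 0) : ContDiffAt ℝ (⊤ : ℕ∞) (uA m) t := by
  have hlin : ContDiff ℝ (⊤ : ℕ∞) (fun s : ℝ => -(m*s)) := (contDiff_const.mul contDiff_id).neg
  have h1 : ContDiff ℝ (⊤ : ℕ∞) (fun s : ℝ => m * Real.exp (-(m*s))) :=
    contDiff_const.mul (Real.contDiff_exp.comp hlin)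
  have h2 : ContDiff ℝ (⊤ : ℕ∞) (fun s : ℝ => 4*Real.pi*s) := contDiff_const.mul contDiff_id
  exact (h1.contDiffAt).div (h2.contDiffAt) (by positivity)

lemma vA_contDiffAt (m : ℝ) {t : ℝ} (ht : t ≠ 0) : ContDiffAt ℝ (⊤ : ℕ∞) (vA m) t := by
  have hlin : ContDiff ℝ (⊤ : ℕ∞) (fun s : ℝ => -(m*s)) := (contDiff_const.mul contDiff_id).neg
  have h1 : ContDiff ℝ (⊤ : ℕ∞) (fun s : ℝ => Real.exp (-(m*s)) * (1+m*s)) :=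
    (Real.contDiff_exp.comp hlin).mul
      (contDiff_const.add (contDiff_const.mul contDiff_id))
  have h2 : ContDiff ℝ (⊤ : ℕ∞) (fun s : ℝ => 4*Real.pi*s^3) :=
    contDiff_const.mul (contDiff_id.pow 3)
  exact (h1.contDiffAt).div (h2.contDiffAt) (by positivity)

lemma phiFund_entry_contDiffOn (m : ℝ) (a b : Fin 4) :
    ContDiffOn ℝ (⊤ : ℕ∞) (fun x => phiFund m x a b) {(0 : E3)}ᶜ := by
  intro x hx
  have hx' : x ≠ 0 := hx
  have hr : ‖x‖ ≠ 0 := norm_ne_zero_iff.2 hx'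
  apply ContDiffAt.contDiffWithinAt
  have hn : ContDiffAt ℝ (⊤ : ℕ∞) (fun y : E3 => ‖y‖) x := contDiffAt_norm ℝ hx'
  have hu : ContDiffAt ℝ (⊤ : ℕ∞) (fun y : E3 => ((uA m ‖y‖ : ℝ) : ℂ)) x :=
    Complex.ofRealCLM.contDiff.contDiffAt.comp _ ((uA_contDiffAt m hr).comp x hn)
  have hv : ContDiffAt ℝ (⊤ : ℕ∞) (fun y : E3 => ((vA m ‖y‖ : ℝ) : ℂ)) x :=
    Complex.ofRealCLM.contDiff.contDiffAt.comp _ ((vA_contDiffAt m hr).comp x hn)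
  have hg : ContDiffAt ℝ (⊤ : ℕ∞) (fun y : E3 => Complex.I * alphaDot y a b) x := by
    have h0 : ContDiff ℝ (⊤ : ℕ∞) (fun y : E3 => Complex.I * (GabCLM a b) y) :=
      contDiff_const.mul (GabCLM a b).contDiff
    have : (fun y : E3 => Complex.I * alphaDot y a b)
        = fun y : E3 => Complex.I * (GabCLM a b) y := by
      funext y; rw [GabCLM_apply]
    rw [this]
    exact h0.contDiffAt
  have hC : ContDiffAt ℝ (⊤ : ℕ∞)
      (fun y : E3 => (uA m ‖y‖ : ℂ) * diracBeta a b
        + (vA m ‖y‖ : ℂ) * (Complex.I * alphaDot y a b)) x :=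
    (hu.mul contDiffAt_const).add (hv.mul hg)
  refine hC.congr_of_eventuallyEq ?_
  have hopen : {y : E3 | y ≠ 0} ∈ nhds x :=
    IsOpen.mem_nhds (isOpen_compl_singleton) hx'
  filter_upwards [hopen] with y hy
  rw [phiFund_apply' m y hy a b]

/-! ### Summation identities -/

lemma sum_smul_alpha_mul (x : E3) (M : Matrix (Fin 4) (Fin 4) ℂ) :
    ∑ j : Fin 3, ((x j : ℝ) : ℂ) • (diracAlpha j * M) = alphaDot x * M := by
  rw [alphaDot, Matrix.sum_mul]
  exact Finset.sum_congr rfl fun j _ => (smul_mul_assoc _ _ _).symm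

/-- For `m > 0`, the fundamental solution `φ` is smooth (entrywise) on `ℝ³ ∖ {0}` and is
annihilated there by the free Dirac operator: `-i Σ_j α_j (∂_j φ)(x) + m β φ(x) = 0`. -/
theorem phiFund_smooth_and_dirac_harmonic (m : ℝ) (hm : 0 < m) :
    (∀ a b : Fin 4,
      ContDiffOn ℝ (⊤ : ℕ∞) (fun x => phiFund m x a b) {(0 : EuclideanSpace ℝ (Fin 3))}ᶜ) ∧
    (∀ x : EuclideanSpace ℝ (Fin 3), x ≠ 0 →
      (-Complex.I) • (∑ j : Fin 3, diracAlpha j * phiFundPartial m j x) +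
        (m : ℂ) • (diracBeta * phiFund m x) = 0) := by
  constructor
  · exact fun a b => phiFund_entry_contDiffOn m a b
  · intro x hx
    have hr : ‖x‖ ≠ 0 := norm_ne_zero_iff.2 hx
    have hrC : ((‖x‖ : ℝ) : ℂ) ≠ 0 := by exact_mod_cast hr
    have step : ∀ j : Fin 3, diracAlpha j * phiFundPartial m j x
        = ((x j : ℝ) : ℂ) • (((uA' m ‖x‖ / ‖x‖ : ℝ) : ℂ) • (diracAlpha j * diracBeta))
          + ((x j : ℝ) : ℂ) • (((vA' m ‖x‖ / ‖x‖ : ℝ) : ℂ) •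
              (Complex.I • (diracAlpha j * alphaDot x)))
          + ((vA m ‖x‖ : ℝ) : ℂ) • (Complex.I • (1 : Matrix (Fin 4) (Fin 4) ℂ)) := by
      intro j
      rw [phiFundPartial_eq m x hx j, Matrix.mul_add, Matrix.mul_add,
        Matrix.mul_smul, Matrix.mul_smul, Matrix.mul_smul, Matrix.mul_smul,
        Matrix.mul_smul, diracAlpha_sq j]
      match_scalars <;> push_cast <;> field_simp <;> ring
    rw [Finset.sum_congr rfl fun j _ => step j, Finset.sum_add_distrib,
      Finset.sum_add_distrib]
    have e1 : ∑ j : Fin 3, ((x j : ℝ) : ℂ) •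
        (((uA' m ‖x‖ / ‖x‖ : ℝ) : ℂ) • (diracAlpha j * diracBeta))
        = ((uA' m ‖x‖ / ‖x‖ : ℝ) : ℂ) • (alphaDot x * diracBeta) := by
      rw [← sum_smul_alpha_mul x diracBeta, Finset.smul_sum]
      exact Finset.sum_congr rfl fun j _ => smul_comm _ _ _
    have e2 : ∑ j : Fin 3, ((x j : ℝ) : ℂ) •
        (((vA' m ‖x‖ / ‖x‖ : ℝ) : ℂ) • (Complex.I • (diracAlpha j * alphaDot x)))
        = ((vA' m ‖x‖ * ‖x‖ : ℝ) : ℂ) • (Complex.I • (1 : Matrix (Fin 4) (Fin 4) ℂ)) := by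
      have hsum : ∑ j : Fin 3, ((x j : ℝ) : ℂ) • (Complex.I • (diracAlpha j * alphaDot x))
          = Complex.I • (alphaDot x * alphaDot x) := by
        rw [← sum_smul_alpha_mul x (alphaDot x), Finset.smul_sum]
        exact Finset.sum_congr rfl fun j _ => (smul_comm _ _ _).symm
      calc ∑ j : Fin 3, ((x j : ℝ) : ℂ) •
            (((vA' m ‖x‖ / ‖x‖ : ℝ) : ℂ) • (Complex.I • (diracAlpha j * alphaDot x)))
          = ((vA' m ‖x‖ / ‖x‖ : ℝ) : ℂ) •
            ∑ j : Fin 3, ((x j : ℝ) : ℂ) • (Complex.I • (diracAlpha j * alphaDot x)) := by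
            rw [Finset.smul_sum]
            exact Finset.sum_congr rfl fun j _ => smul_comm _ _ _
        _ = ((vA' m ‖x‖ / ‖x‖ : ℝ) : ℂ) • (Complex.I • (((‖x‖^2 : ℝ) : ℂ) • 1)) := by
            rw [hsum, alphaDot_sq]
        _ = ((vA' m ‖x‖ * ‖x‖ : ℝ) : ℂ) • (Complex.I • (1 : Matrix (Fin 4) (Fin 4) ℂ)) := by
            match_scalars
            push_cast
            field_simp
    have e3 : ∑ _j : Fin 3, ((vA m ‖x‖ : ℝ) : ℂ) • (Complex.I • (1 : Matrix (Fin 4) (Fin 4) ℂ))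
        = ((3 * vA m ‖x‖ : ℝ) : ℂ) • (Complex.I • (1 : Matrix (Fin 4) (Fin 4) ℂ)) := by
      simp only [Finset.sum_const, Finset.card_univ, Fintype.card_fin]
      match_scalars
      push_cast
      ring
    rw [e1, e2, e3, phiFund_eq m x hx, Matrix.mul_add, Matrix.mul_smul, Matrix.mul_smul,
      diracBeta_sq, Matrix.mul_smul, diracBeta_alphaDot]
    have hu' : ((uA' m ‖x‖ / ‖x‖ : ℝ) : ℂ) = -(((m : ℝ) : ℂ) * ((vA m ‖x‖ : ℝ) : ℂ)) := by
      rw [show uA' m ‖x‖ = -(m * vA m ‖x‖ * ‖x‖) from rfl]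
      push_cast
      field_simp
    have hode : ((vA' m ‖x‖ * ‖x‖ : ℝ) : ℂ) + ((3 * vA m ‖x‖ : ℝ) : ℂ)
        + ((m : ℝ) : ℂ) * ((uA m ‖x‖ : ℝ) : ℂ) = 0 := by
      have h : ((vA' m ‖x‖ * ‖x‖ + 3 * vA m ‖x‖ + m * uA m ‖x‖ : ℝ) : ℂ) = 0 := by
        rw [odeRel m hr]; norm_num
      push_cast at h ⊢
      linear_combination h
    push_cast at hu' hode
    match_scalars
    · linear_combination -Complex.I * hu'
    · linear_combination hode + (-(((vA' m ‖x‖ : ℝ):ℂ)) * ((‖x‖:ℝ):ℂ) - 3 * ((vA m ‖x‖:ℝ):ℂ)) * Complex.I_sq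
end

section
/- Let m > 0 and let μ be a Borel measure on ℝ³ with compact support satisfying the two-dimensional growth condition: there exists C > 0 such that μ(B(x,r)) ≤ C r² for every x ∈ ℝ³ and r > 0. Then there exists C' > 0 such that for every g ∈ L²(μ; ℂ⁴): for Lebesgue-almost every x ∈ ℝ³ the integral Φg(x) := ∫ φ(x−y) g(y) dμ(y) converges absolutely, Φg belongs to L²(ℝ³; ℂ⁴) with respect to Lebesgue measure, and ∫_{ℝ³} |Φg(x)|² dx ≤ C' ∫ |g|² dμ. -/
open Matrix

open MeasureTheory

/-- The single-layer potential `Φg(x) = ∫ φ(x - y) g(y) dμ(y)`. -/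
noncomputable def singleLayer (m : ℝ) (μ : Measure (EuclideanSpace ℝ (Fin 3)))
    (g : EuclideanSpace ℝ (Fin 3) → Fin 4 → ℂ) (x : EuclideanSpace ℝ (Fin 3)) : Fin 4 → ℂ :=
  ∫ y, (phiFund m (x - y)).mulVec (g y) ∂μ


/-!
Since `‖φ(u)‖ ≲ |u|⁻²`, it suffices to bound the positive operator with kernel `|x - y|⁻²`.
Expanding the square, `∫ (∫ |x - y|⁻² G(y) dμ(y))² dx = ∬ G(y) G(z) K(y, z) dμ(y) dμ(z)` with
`K(y, z) = ∫ |x - y|⁻² |x - z|⁻² dx ≲ |y - z|⁻¹` in `ℝ³` (polar coordinates: the singularities are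
integrable and the integrand decays like `|x|⁻⁴`). By the layer-cake formula, the growth bound
`μ(B(y, r)) ≤ C r²` and the finite mass of `μ` make `∫ |y - z|⁻¹ dμ(z)` bounded uniformly in `y`,
and Schur's test for the symmetric kernel `|y - z|⁻¹` gives `∬ G(y) G(z) |y - z|⁻¹ ≲ ∫ G²`.
-/

open Metric Set ENNReal Module Function

theorem norm_diracBeta_apply_le (i j : Fin 4) : ‖diracBeta i j‖ ≤ 1 := by
  fin_cases i <;> fin_cases j <;> simp [diracBeta]

theorem norm_diracAlpha_apply_le (k : Fin 3) (i j : Fin 4) : ‖diracAlpha k i j‖ ≤ 1 := by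
  fin_cases k <;> fin_cases i <;> fin_cases j <;> simp [diracAlpha]

theorem norm_alphaDot_apply_le (u : EuclideanSpace ℝ (Fin 3)) (i j : Fin 4) :
    ‖alphaDot u i j‖ ≤ 3 * ‖u‖ := by
  simp only [alphaDot, Matrix.sum_apply, Matrix.smul_apply, smul_eq_mul]
  calc ‖∑ k, (u k : ℂ) * diracAlpha k i j‖ ≤ ∑ k, ‖(u k : ℂ) * diracAlpha k i j‖ :=
        norm_sum_le _ _
    _ ≤ ∑ _k : Fin 3, ‖u‖ := by
        gcongr with k
        rw [norm_mul, Complex.norm_real]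
        exact (mul_le_of_le_one_right (norm_nonneg _) (norm_diracAlpha_apply_le k i j)).trans
          (PiLp.norm_apply_le u k)
    _ = 3 * ‖u‖ := by simp

theorem norm_phiFund_apply_le {m : ℝ} (hm : 0 ≤ m) (u : EuclideanSpace ℝ (Fin 3)) (i j : Fin 4) :
    ‖phiFund m u i j‖ ≤ ‖u‖⁻¹ ^ 2 := by
  rcases eq_or_ne u 0 with rfl | hu
  · simp [phiFund]
  have hr : 0 < ‖u‖ := norm_pos_iff.2 hu
  set r := ‖u‖
  have hentry : phiFund m u i j = ((Real.exp (-(m * r)) / (4 * Real.pi * r) : ℝ) : ℂ) *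
      (m * diracBeta i j + (((1 + m * r) / r ^ 2 : ℝ) : ℂ) * (Complex.I * alphaDot u i j)) := by
    simp [phiFund, r]
  -- `1 + m r ≤ exp (m r)` absorbs the polynomial factor.
  have hexp : Real.exp (-(m * r)) * (1 + m * r) ≤ 1 := by
    calc Real.exp (-(m * r)) * (1 + m * r) ≤ Real.exp (-(m * r)) * Real.exp (m * r) := by
          gcongr; linarith [Real.add_one_le_exp (m * r)]
      _ = 1 := by rw [← Real.exp_add]; simp
  calc ‖phiFund m u i j‖
      ≤ Real.exp (-(m * r)) / (4 * Real.pi * r) *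
          (m * 1 + (1 + m * r) / r ^ 2 * (1 * (3 * r))) := by
        rw [hentry, norm_mul, Complex.norm_real, Real.norm_of_nonneg (by positivity)]
        gcongr
        refine norm_add_le_of_le ?_ ?_
        · rw [norm_mul, Complex.norm_real, Real.norm_of_nonneg hm]
          gcongr
          exact norm_diracBeta_apply_le i j
        · rw [norm_mul, norm_mul, Complex.norm_I, Complex.norm_real,
            Real.norm_of_nonneg (by positivity)]
          gcongr
          exact norm_alphaDot_apply_le u i j
    _ = Real.exp (-(m * r)) * (4 * (m * r) + 3) / (4 * Real.pi * r ^ 2) := by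
        field_simp
        ring
    _ ≤ 4 / (4 * Real.pi * r ^ 2) := by
        gcongr
        nlinarith [Real.exp_pos (-(m * r))]
    _ ≤ r⁻¹ ^ 2 := by
        rw [inv_pow, div_le_iff₀ (by positivity)]
        field_simp
        nlinarith [Real.pi_gt_three]

theorem norm_phiFund_mulVec_le {m : ℝ} (hm : 0 ≤ m) (u : EuclideanSpace ℝ (Fin 3))
    (v : Fin 4 → ℂ) : ‖phiFund m u *ᵥ v‖ ≤ 4 * ‖u‖⁻¹ ^ 2 * ‖v‖ := by
  refine (pi_norm_le_iff_of_nonneg (by positivity)).2 fun i => ?_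
  calc ‖∑ j, phiFund m u i j * v j‖ ≤ ∑ j, ‖phiFund m u i j * v j‖ := norm_sum_le _ _
    _ ≤ ∑ _j : Fin 4, ‖u‖⁻¹ ^ 2 * ‖v‖ := by
        gcongr with j
        rw [norm_mul]
        exact mul_le_mul (norm_phiFund_apply_le hm u i j) (norm_le_pi_norm v j)
          (norm_nonneg _) (by positivity)
    _ = 4 * ‖u‖⁻¹ ^ 2 * ‖v‖ := by simp [mul_assoc]

theorem enorm_phiFund_mulVec_le {m : ℝ} (hm : 0 ≤ m) (u : EuclideanSpace ℝ (Fin 3))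
    (v : Fin 4 → ℂ) : ‖phiFund m u *ᵥ v‖ₑ ≤ 4 * ‖u‖ₑ⁻¹ ^ 2 * ‖v‖ₑ := by
  rcases eq_or_ne u 0 with rfl | hu
  · simp [phiFund]
  calc ‖phiFund m u *ᵥ v‖ₑ = ENNReal.ofReal ‖phiFund m u *ᵥ v‖ := (ofReal_norm _).symm
    _ ≤ ENNReal.ofReal (4 * ‖u‖⁻¹ ^ 2 * ‖v‖) := ofReal_le_ofReal (norm_phiFund_mulVec_le hm u v)
    _ = 4 * ‖u‖ₑ⁻¹ ^ 2 * ‖v‖ₑ := by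
        rw [ofReal_mul (by positivity), ofReal_mul (by norm_num), ofReal_pow (by positivity),
          ofReal_inv_of_pos (norm_pos_iff.2 hu), ofReal_norm, ofReal_norm]
        norm_num

theorem measurable_phiFund_apply (m : ℝ) (i j : Fin 4) :
    Measurable fun u => phiFund m u i j := by
  simp only [phiFund, alphaDot, Matrix.smul_apply, Matrix.add_apply, Matrix.sum_apply,
    smul_eq_mul]
  fun_prop

theorem aemeasurable_phiFund_sub_mulVec (ν μ : Measure (EuclideanSpace ℝ (Fin 3))) (m : ℝ)
    {g : EuclideanSpace ℝ (Fin 3) → Fin 4 → ℂ} (hg : AEMeasurable g μ) :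
    AEMeasurable (fun p : _ × _ => phiFund m (p.1 - p.2) *ᵥ g p.2) (ν.prod μ) := by
  refine aemeasurable_pi_lambda _ fun i => ?_
  simp only [Matrix.mulVec, dotProduct]
  exact Finset.aemeasurable_fun_sum _ fun j _ =>
    ((measurable_phiFund_apply m i j).comp measurable_sub).aemeasurable.mul
      ((measurable_pi_apply j).comp_aemeasurable hg.comp_snd)

theorem lintegral_fun_norm_addHaar {E : Type*} [NormedAddCommGroup E] [NormedSpace ℝ E]
    [Nontrivial E] [MeasurableSpace E] [BorelSpace E] [FiniteDimensional ℝ E] (μ : Measure E)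
    [μ.IsAddHaarMeasure] {f : ℝ → ℝ≥0∞} (hf : Measurable f) :
    ∫⁻ x, f ‖x‖ ∂μ =
      finrank ℝ E * μ (ball 0 1) * ∫⁻ r in Ioi 0, ENNReal.ofReal (r ^ (finrank ℝ E - 1)) * f r := by
  have hsnd : Measurable fun p : sphere (0 : E) 1 × Ioi (0 : ℝ) => f p.2 :=
    hf.comp (measurable_subtype_coe.comp measurable_snd)
  have hdensity := lintegral_withDensity_eq_lintegral_mul
    (Measure.comap (Subtype.val : Ioi (0 : ℝ) → ℝ) volume)
    (measurable_subtype_coe.pow_const (finrank ℝ E - 1)).ennreal_ofReal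
    (hf.comp measurable_subtype_coe)
  simp only [Function.comp_def, Pi.mul_apply] at hdensity
  calc ∫⁻ x, f ‖x‖ ∂μ = ∫⁻ x in {0}ᶜ, f ‖x‖ ∂μ := by rw [restrict_compl_singleton]
    _ = ∫⁻ x : ({0}ᶜ : Set E), f ‖x.1‖ ∂μ.comap (↑) :=
      (lintegral_subtype_comap (measurableSet_singleton 0).compl _).symm
    _ = ∫⁻ p, f p.2 ∂μ.toSphere.prod (Measure.volumeIoiPow (finrank ℝ E - 1)) := by
      simpa using μ.measurePreserving_homeomorphUnitSphereProd.lintegral_comp_emb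
        (Homeomorph.measurableEmbedding _) fun p => f p.2
    _ = μ.toSphere univ * ∫⁻ r, f r ∂Measure.volumeIoiPow (finrank ℝ E - 1) := by
      rw [lintegral_prod _ hsnd.aemeasurable]
      simp only [lintegral_const]
      rw [mul_comm]
    _ = _ := by
      rw [Measure.toSphere_apply_univ, Measure.volumeIoiPow, hdensity,
        lintegral_subtype_comap measurableSet_Ioi fun r => ENNReal.ofReal (r ^ _) * f r]

theorem lintegral_Ioi_inv_sq {β : ℝ} (hβ : 0 < β) :
    ∫⁻ t in Ioi β, (ENNReal.ofReal t)⁻¹ ^ 2 = (ENNReal.ofReal β)⁻¹ := by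
  have hrpow : ∀ t ∈ Ioi β, (ENNReal.ofReal t)⁻¹ ^ 2 = ENNReal.ofReal (t ^ (-2 : ℝ)) := by
    intro t (ht : β < t)
    have ht0 : 0 < t := hβ.trans ht
    rw [← ofReal_inv_of_pos ht0, ← ofReal_pow (inv_nonneg.2 ht0.le), Real.rpow_neg ht0.le,
      Real.rpow_two, inv_pow]
  rw [setLIntegral_congr_fun measurableSet_Ioi hrpow, ← ofReal_integral_eq_lintegral_ofReal
    (integrableOn_Ioi_rpow_of_lt (by norm_num) hβ)
    (ae_restrict_of_forall_mem measurableSet_Ioi fun t ht => Real.rpow_nonneg (hβ.trans ht).le _),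
    integral_Ioi_rpow_of_lt (by norm_num) hβ, ← ofReal_inv_of_pos hβ]
  norm_num [Real.rpow_neg_one]

theorem lintegral_Ioi_min_inv_sq_le (A B : ℝ≥0∞) {β : ℝ} (hβ : 0 < β) :
    ∫⁻ t in Ioi 0, min A (B * (ENNReal.ofReal t)⁻¹ ^ 2) ≤
      A * ENNReal.ofReal β + B * (ENNReal.ofReal β)⁻¹ := by
  rw [← Ioc_union_Ioi_eq_Ioi hβ.le]
  refine (lintegral_union_le _ _ _).trans (add_le_add ?_ ?_)
  · calc ∫⁻ t in Ioc 0 β, min A (B * (ENNReal.ofReal t)⁻¹ ^ 2) ≤ ∫⁻ _t in Ioc 0 β, A :=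
          lintegral_mono fun t => min_le_left _ _
      _ = A * ENNReal.ofReal β := by rw [setLIntegral_const, Real.volume_Ioc, sub_zero]
  · calc ∫⁻ t in Ioi β, min A (B * (ENNReal.ofReal t)⁻¹ ^ 2)
          ≤ ∫⁻ t in Ioi β, B * (ENNReal.ofReal t)⁻¹ ^ 2 := lintegral_mono fun t => min_le_right _ _
      _ = B * (ENNReal.ofReal β)⁻¹ := by
          rw [lintegral_const_mul _ (by fun_prop), lintegral_Ioi_inv_sq hβ]

-- Whichever of `u`, `v` has the larger norm has norm `≥ ‖u - v‖ / 2`, so its factor is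
-- bounded both by `(‖u - v‖ / 2)⁻²` and by the other factor.
theorem enorm_inv_sq_mul_enorm_inv_sq_le {E : Type*} [SeminormedAddCommGroup E] (u v : E) :
    ‖u‖ₑ⁻¹ ^ 2 * ‖v‖ₑ⁻¹ ^ 2 ≤
      ‖u‖ₑ⁻¹ ^ 2 * min ((‖u - v‖ₑ / 2)⁻¹ ^ 2) (‖u‖ₑ⁻¹ ^ 2) +
        ‖v‖ₑ⁻¹ ^ 2 * min ((‖u - v‖ₑ / 2)⁻¹ ^ 2) (‖v‖ₑ⁻¹ ^ 2) := by
  wlog h : ‖u‖ₑ ≤ ‖v‖ₑ generalizing u v with H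
  · calc ‖u‖ₑ⁻¹ ^ 2 * ‖v‖ₑ⁻¹ ^ 2 = ‖v‖ₑ⁻¹ ^ 2 * ‖u‖ₑ⁻¹ ^ 2 := mul_comm _ _
      _ ≤ _ := H v u (le_of_not_ge h)
      _ = _ := by rw [enorm_sub_rev, add_comm]
  have hv : ‖u - v‖ₑ / 2 ≤ ‖v‖ₑ := by
    refine ENNReal.div_le_of_le_mul (enorm_sub_le.trans ?_)
    rw [mul_two]
    gcongr
  have hmin : ‖v‖ₑ⁻¹ ^ 2 ≤ min ((‖u - v‖ₑ / 2)⁻¹ ^ 2) (‖u‖ₑ⁻¹ ^ 2) :=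
    le_min (by gcongr) (by gcongr)
  calc ‖u‖ₑ⁻¹ ^ 2 * ‖v‖ₑ⁻¹ ^ 2 ≤ ‖u‖ₑ⁻¹ ^ 2 * min ((‖u - v‖ₑ / 2)⁻¹ ^ 2) (‖u‖ₑ⁻¹ ^ 2) := by
        gcongr
    _ ≤ _ := le_self_add

section InvSqKernel

variable {E : Type*} [NormedAddCommGroup E] [NormedSpace ℝ E] [MeasurableSpace E] [BorelSpace E]
  [FiniteDimensional ℝ E] (μ : Measure E) [μ.IsAddHaarMeasure]

theorem lintegral_enorm_inv_sq_mul_min_le (hE : finrank ℝ E = 3) {c : ℝ≥0∞} (hc0 : c ≠ 0)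
    (hc : c ≠ ⊤) : ∫⁻ x, ‖x‖ₑ⁻¹ ^ 2 * min (c⁻¹ ^ 2) (‖x‖ₑ⁻¹ ^ 2) ∂μ ≤ 6 * μ (ball 0 1) * c⁻¹ := by
  have : Nontrivial E := Module.nontrivial_of_finrank_eq_succ hE
  have hcβ : 0 < c.toReal := ENNReal.toReal_pos hc0 hc
  simp_rw [← ofReal_norm]
  rw [lintegral_fun_norm_addHaar μ (f := fun r => (ENNReal.ofReal r)⁻¹ ^ 2 *
    min (c⁻¹ ^ 2) ((ENNReal.ofReal r)⁻¹ ^ 2)) (by fun_prop), hE]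
  have hradial : ∀ r ∈ Ioi (0 : ℝ), ENNReal.ofReal (r ^ (3 - 1)) *
      ((ENNReal.ofReal r)⁻¹ ^ 2 * min (c⁻¹ ^ 2) ((ENNReal.ofReal r)⁻¹ ^ 2)) =
      min (c⁻¹ ^ 2) (1 * (ENNReal.ofReal r)⁻¹ ^ 2) := by
    intro r (hr : 0 < r)
    rw [← mul_assoc, ofReal_pow hr.le, ← mul_pow, ENNReal.mul_inv_cancel (by simpa using hr)
      ofReal_ne_top, one_pow, one_mul, one_mul]
  rw [setLIntegral_congr_fun measurableSet_Ioi hradial]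
  calc (3 : ℕ) * μ (ball 0 1) * ∫⁻ r in Ioi 0, min (c⁻¹ ^ 2) (1 * (ENNReal.ofReal r)⁻¹ ^ 2)
      ≤ (3 : ℕ) * μ (ball 0 1) * (c⁻¹ ^ 2 * ENNReal.ofReal c.toReal +
          1 * (ENNReal.ofReal c.toReal)⁻¹) := by
        gcongr
        exact lintegral_Ioi_min_inv_sq_le _ _ hcβ
    _ = 6 * μ (ball 0 1) * c⁻¹ := by
        rw [ofReal_toReal hc, sq, mul_assoc c⁻¹ c⁻¹ c, ENNReal.inv_mul_cancel hc0 hc]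
        push_cast
        ring

theorem lintegral_enorm_sub_inv_sq_mul_le (hE : finrank ℝ E = 3) (y z : E) :
    ∫⁻ x, ‖x - y‖ₑ⁻¹ ^ 2 * ‖x - z‖ₑ⁻¹ ^ 2 ∂μ ≤ 24 * μ (ball 0 1) * ‖y - z‖ₑ⁻¹ := by
  have : Nontrivial E := Module.nontrivial_of_finrank_eq_succ hE
  rcases eq_or_ne y z with rfl | hyz
  · simp [ENNReal.mul_top, (measure_ball_pos μ (0 : E) one_pos).ne']
  set c := ‖y - z‖ₑ / 2
  have hc0 : c ≠ 0 := by simpa [c, sub_eq_zero] using hyz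
  have hc : c ≠ ⊤ := ENNReal.div_ne_top enorm_ne_top two_ne_zero
  set K : E → ℝ≥0∞ := fun u => ‖u‖ₑ⁻¹ ^ 2 * min (c⁻¹ ^ 2) (‖u‖ₑ⁻¹ ^ 2)
  have hK : Measurable K := by fun_prop
  calc ∫⁻ x, ‖x - y‖ₑ⁻¹ ^ 2 * ‖x - z‖ₑ⁻¹ ^ 2 ∂μ ≤ ∫⁻ x, K (x - y) + K (x - z) ∂μ := by
        refine lintegral_mono fun x => ?_
        simpa [K, c, enorm_sub_rev z y] using enorm_inv_sq_mul_enorm_inv_sq_le (x - y) (x - z)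
    _ = 2 * ∫⁻ x, K x ∂μ := by
        rw [lintegral_add_left (f := fun x => K (x - y)) (by fun_prop),
          lintegral_sub_right_eq_self K y, lintegral_sub_right_eq_self K z, two_mul]
    _ ≤ 2 * (6 * μ (ball 0 1) * c⁻¹) := by
        gcongr
        exact lintegral_enorm_inv_sq_mul_min_le μ hE hc0 hc
    _ = 24 * μ (ball 0 1) * ‖y - z‖ₑ⁻¹ := by
        rw [show c⁻¹ = 2 * ‖y - z‖ₑ⁻¹ by
          rw [ENNReal.inv_div (Or.inl ofNat_ne_top) (Or.inl two_ne_zero), div_eq_mul_inv]]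
        ring

end InvSqKernel

section QuadraticGrowth

open Filter Topology

variable {X : Type*} [MetricSpace X] [MeasurableSpace X] {μ : Measure X} {C : ℝ}

theorem measure_singleton_eq_zero_of_measure_ball_le
    (hgrowth : ∀ x r, 0 < r → μ (ball x r) ≤ ENNReal.ofReal (C * r ^ 2)) (x : X) :
    μ {x} = 0 := by
  have hlim : Tendsto (fun r : ℝ => ENNReal.ofReal (C * r ^ 2)) (𝓝[>] 0) (𝓝 0) := by
    have : Tendsto (fun r : ℝ => C * r ^ 2) (𝓝[>] 0) (𝓝 (C * 0 ^ 2)) :=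
      ((Continuous.tendsto (by fun_prop) 0).mono_left nhdsWithin_le_nhds)
    simpa using ENNReal.tendsto_ofReal this
  refine nonpos_iff_eq_zero.1 (ge_of_tendsto hlim ?_)
  filter_upwards [self_mem_nhdsWithin] with r (hr : 0 < r)
  exact (measure_mono (singleton_subset_iff.2 (mem_ball_self hr))).trans (hgrowth x r hr)

theorem isFiniteMeasure_of_measure_ball_le {S : Set X} (hS : Bornology.IsBounded S)
    (hSfull : μ Sᶜ = 0) (hgrowth : ∀ x r, 0 < r → μ (ball x r) ≤ ENNReal.ofReal (C * r ^ 2)) :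
    IsFiniteMeasure μ := by
  refine ⟨?_⟩
  rcases S.eq_empty_or_nonempty with rfl | ⟨c, -⟩
  · simp_all
  obtain ⟨r, hr, hSr⟩ := hS.subset_ball_lt 0 c
  calc μ univ ≤ μ S + μ Sᶜ := measure_univ_le_add_compl S
    _ ≤ μ (ball c r) := by rw [hSfull, add_zero]; exact measure_mono hSr
    _ < ⊤ := (hgrowth c r hr).trans_lt ofReal_lt_top

theorem lintegral_edist_inv_le_of_measure_ball_le [OpensMeasurableSpace X]
    (hgrowth : ∀ x r, 0 < r → μ (ball x r) ≤ ENNReal.ofReal (C * r ^ 2)) (y : X) :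
    ∫⁻ z, (edist y z)⁻¹ ∂μ ≤ μ univ + ENNReal.ofReal C := by
  have hae : ∀ᵐ z ∂μ, (edist y z)⁻¹ = ENNReal.ofReal (dist y z)⁻¹ := by
    filter_upwards [compl_mem_ae_iff.2 (measure_singleton_eq_zero_of_measure_ball_le hgrowth y)]
      with z (hz : z ≠ y)
    rw [edist_dist, ofReal_inv_of_pos (dist_pos.2 hz.symm)]
  rw [lintegral_congr_ae hae, lintegral_eq_lintegral_meas_lt μ
    (ae_of_all _ fun z => inv_nonneg.2 dist_nonneg) (by fun_prop)]
  calc ∫⁻ t in Ioi 0, μ {z | t < (dist y z)⁻¹}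
      ≤ ∫⁻ t in Ioi 0, min (μ univ) (ENNReal.ofReal C * (ENNReal.ofReal t)⁻¹ ^ 2) := by
        refine setLIntegral_mono (by fun_prop) fun t (ht : 0 < t) =>
          le_min (measure_mono (subset_univ _)) ?_
        calc μ {z | t < (dist y z)⁻¹} ≤ μ (ball y t⁻¹) := measure_mono fun z hz => by
              rw [mem_ball, dist_comm]
              exact (lt_inv_comm₀ ht (inv_pos.1 (ht.trans hz))).1 hz
          _ ≤ ENNReal.ofReal (C * t⁻¹ ^ 2) := hgrowth y _ (inv_pos.2 ht)
          _ = ENNReal.ofReal C * (ENNReal.ofReal t)⁻¹ ^ 2 := by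
              rw [ofReal_mul' (by positivity), ofReal_pow (by positivity), ofReal_inv_of_pos ht]
    _ ≤ μ univ * ENNReal.ofReal 1 + ENNReal.ofReal C * (ENNReal.ofReal 1)⁻¹ :=
        lintegral_Ioi_min_inv_sq_le _ _ one_pos
    _ = μ univ + ENNReal.ofReal C := by simp

end QuadraticGrowth

theorem ENNReal.mul_le_sq_add_sq (a b : ℝ≥0∞) : a * b ≤ a ^ 2 + b ^ 2 := by
  rcases le_total a b with h | h
  · calc a * b ≤ b * b := by gcongr
      _ ≤ a ^ 2 + b ^ 2 := by rw [← sq]; exact le_add_self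
  · calc a * b ≤ a * a := by gcongr
      _ ≤ a ^ 2 + b ^ 2 := by rw [← sq]; exact le_self_add

section KernelSquare

variable {X Y : Type*} [MeasurableSpace X] [MeasurableSpace Y] {ν : Measure X} {μ : Measure Y}
  [SFinite ν] [SFinite μ]

theorem lintegral_sq_lintegral_mul_eq {k : X → Y → ℝ≥0∞} (hk : Measurable (uncurry k))
    {G : Y → ℝ≥0∞} (hG : Measurable G) :
    ∫⁻ x, (∫⁻ y, k x y * G y ∂μ) ^ 2 ∂ν =
      ∫⁻ y, ∫⁻ z, G y * G z * ∫⁻ x, k x y * k x z ∂ν ∂μ ∂μ := by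
  have hsq : ∀ x, (∫⁻ y, k x y * G y ∂μ) ^ 2 = ∫⁻ y, ∫⁻ z, k x y * G y * (k x z * G z) ∂μ ∂μ := by
    intro x
    rw [sq, ← lintegral_mul_const _ (by fun_prop)]
    exact lintegral_congr fun y => (lintegral_const_mul _ (by fun_prop)).symm
  simp_rw [hsq]
  rw [lintegral_lintegral_swap (by fun_prop)]
  refine lintegral_congr fun y => ?_
  rw [lintegral_lintegral_swap (by fun_prop)]
  refine lintegral_congr fun z => ?_
  rw [← lintegral_const_mul _ (by fun_prop)]
  exact lintegral_congr fun x => by ring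

theorem lintegral_lintegral_mul_mul_le_of_symm {W : Y → Y → ℝ≥0∞} (hW : Measurable (uncurry W))
    (hWsymm : ∀ y z, W y z = W z y) {D : ℝ≥0∞} (hD : ∀ y, ∫⁻ z, W y z ∂μ ≤ D)
    {G : Y → ℝ≥0∞} (hG : Measurable G) :
    ∫⁻ y, ∫⁻ z, G y * G z * W y z ∂μ ∂μ ≤ 2 * D * ∫⁻ y, G y ^ 2 ∂μ := by
  have hswap : ∫⁻ y, ∫⁻ z, G z ^ 2 * W y z ∂μ ∂μ = ∫⁻ y, ∫⁻ z, G y ^ 2 * W y z ∂μ ∂μ := by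
    rw [lintegral_lintegral_swap (by fun_prop)]
    exact lintegral_congr fun y => lintegral_congr fun z => by rw [hWsymm]
  calc ∫⁻ y, ∫⁻ z, G y * G z * W y z ∂μ ∂μ
      ≤ ∫⁻ y, ∫⁻ z, G y ^ 2 * W y z + G z ^ 2 * W y z ∂μ ∂μ := by
        gcongr with y z
        rw [← add_mul]
        gcongr
        exact ENNReal.mul_le_sq_add_sq _ _
    _ = ∫⁻ y, G y ^ 2 * ∫⁻ z, W y z ∂μ + ∫⁻ z, G z ^ 2 * W y z ∂μ ∂μ := by
        refine lintegral_congr fun y => ?_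
        rw [lintegral_add_left (by fun_prop), lintegral_const_mul _ (by fun_prop)]
    _ = 2 * ∫⁻ y, G y ^ 2 * ∫⁻ z, W y z ∂μ ∂μ := by
        rw [lintegral_add_left (by fun_prop), hswap, two_mul]
        congr 1
        exact lintegral_congr fun y => lintegral_const_mul _ (by fun_prop)
    _ ≤ 2 * ∫⁻ y, G y ^ 2 * D ∂μ := by gcongr with y; exact hD y
    _ = 2 * D * ∫⁻ y, G y ^ 2 ∂μ := by rw [lintegral_mul_const _ (by fun_prop)]; ring

theorem lintegral_sq_lintegral_mul_le {k : X → Y → ℝ≥0∞} (hk : Measurable (uncurry k))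
    {W : Y → Y → ℝ≥0∞} (hW : Measurable (uncurry W)) (hWsymm : ∀ y z, W y z = W z y)
    (hkW : ∀ y z, ∫⁻ x, k x y * k x z ∂ν ≤ W y z) {D : ℝ≥0∞} (hD : ∀ y, ∫⁻ z, W y z ∂μ ≤ D)
    {G : Y → ℝ≥0∞} (hG : Measurable G) :
    ∫⁻ x, (∫⁻ y, k x y * G y ∂μ) ^ 2 ∂ν ≤ 2 * D * ∫⁻ y, G y ^ 2 ∂μ :=
  calc ∫⁻ x, (∫⁻ y, k x y * G y ∂μ) ^ 2 ∂ν
      = ∫⁻ y, ∫⁻ z, G y * G z * ∫⁻ x, k x y * k x z ∂ν ∂μ ∂μ := lintegral_sq_lintegral_mul_eq hk hG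
    _ ≤ ∫⁻ y, ∫⁻ z, G y * G z * W y z ∂μ ∂μ := by gcongr with y z; exact hkW y z
    _ ≤ 2 * D * ∫⁻ y, G y ^ 2 ∂μ := lintegral_lintegral_mul_mul_le_of_symm hW hWsymm hD hG

end KernelSquare

section SquareIntegrable

variable {X Y E : Type*} [MeasurableSpace X] [MeasurableSpace Y] {ν : Measure X} {μ : Measure Y}
  [NormedAddCommGroup E]

theorem memLp_two_iff_lintegral_enorm_sq_lt_top {f : X → E} (hf : AEStronglyMeasurable f ν) :
    MemLp f 2 ν ↔ ∫⁻ x, ‖f x‖ₑ ^ 2 ∂ν < ⊤ := by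
  simp [MemLp, hf, eLpNorm_lt_top_iff_lintegral_rpow_enorm_lt_top two_ne_zero ofNat_ne_top]

theorem integral_norm_sq_eq_toReal_lintegral {f : X → E} (hf : AEStronglyMeasurable f ν) :
    ∫ x, ‖f x‖ ^ 2 ∂ν = (∫⁻ x, ‖f x‖ₑ ^ 2 ∂ν).toReal := by
  rw [integral_eq_lintegral_of_nonneg_ae (ae_of_all _ fun x => by positivity) (by fun_prop)]
  simp_rw [ofReal_pow (norm_nonneg _), ofReal_norm]

theorem memLp_two_integral_of_lintegral_enorm_le [NormedSpace ℝ E] [SFinite μ] {f : X → Y → E}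
    (hf : AEStronglyMeasurable (uncurry f) (ν.prod μ)) {H : X → ℝ≥0∞} (hHm : AEMeasurable H ν)
    (hfH : ∀ x, ∫⁻ y, ‖f x y‖ₑ ∂μ ≤ H x) (hH : ∫⁻ x, H x ^ 2 ∂ν ≠ ⊤) :
    (∀ᵐ x ∂ν, Integrable (f x) μ) ∧ MemLp (fun x => ∫ y, f x y ∂μ) 2 ν ∧
      ∫⁻ x, ‖∫ y, f x y ∂μ‖ₑ ^ 2 ∂ν ≤ ∫⁻ x, H x ^ 2 ∂ν := by
  have hbound : ∫⁻ x, ‖∫ y, f x y ∂μ‖ₑ ^ 2 ∂ν ≤ ∫⁻ x, H x ^ 2 ∂ν := by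
    gcongr with x
    exact (enorm_integral_le_lintegral_enorm _).trans (hfH x)
  refine ⟨?_, (memLp_two_iff_lintegral_enorm_sq_lt_top hf.integral_prod_right').2
    (hbound.trans_lt hH.lt_top), hbound⟩
  filter_upwards [hf.prodMk_left, ae_lt_top' (hHm.pow_const 2) hH] with x hfx hHx
  exact ⟨hfx, (hfH x).trans_lt (by simpa using hHx)⟩

end SquareIntegrable

theorem lintegral_sq_lintegral_enorm_sub_inv_sq_le {E : Type*} [NormedAddCommGroup E]
    [NormedSpace ℝ E] [MeasurableSpace E] [BorelSpace E] [FiniteDimensional ℝ E]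
    (hE : finrank ℝ E = 3) (ν : Measure E) [ν.IsAddHaarMeasure] {μ : Measure E} [SFinite μ]
    {C : ℝ} (hgrowth : ∀ x r, 0 < r → μ (ball x r) ≤ ENNReal.ofReal (C * r ^ 2))
    {G : E → ℝ≥0∞} (hG : Measurable G) :
    ∫⁻ x, (∫⁻ y, ‖x - y‖ₑ⁻¹ ^ 2 * G y ∂μ) ^ 2 ∂ν ≤
      2 * (24 * ν (ball 0 1) * (μ univ + ENNReal.ofReal C)) * ∫⁻ y, G y ^ 2 ∂μ := by
  refine lintegral_sq_lintegral_mul_le (by fun_prop)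
    (W := fun y z => 24 * ν (ball 0 1) * ‖y - z‖ₑ⁻¹) (by fun_prop)
    (fun y z => by rw [enorm_sub_rev]) (lintegral_enorm_sub_inv_sq_mul_le ν hE)
    (fun y => ?_) hG
  rw [lintegral_const_mul _ (by fun_prop)]
  simp_rw [← edist_eq_enorm_sub]
  gcongr
  exact lintegral_edist_inv_le_of_measure_ball_le hgrowth y

theorem singleLayer_memLp_two_of_measure_ball_le {m : ℝ} (hm : 0 ≤ m)
    {μ : Measure (EuclideanSpace ℝ (Fin 3))} [IsFiniteMeasure μ] {C : ℝ}
    (hgrowth : ∀ x r, 0 < r → μ (ball x r) ≤ ENNReal.ofReal (C * r ^ 2))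
    {g : EuclideanSpace ℝ (Fin 3) → Fin 4 → ℂ} (hg : MemLp g 2 μ) :
    (∀ᵐ x ∂volume, Integrable (fun y => phiFund m (x - y) *ᵥ g y) μ) ∧
      MemLp (singleLayer m μ g) 2 volume ∧
      ∫⁻ x, ‖singleLayer m μ g x‖ₑ ^ 2 ≤
        32 * (24 * volume (ball (0 : EuclideanSpace ℝ (Fin 3)) 1) * (μ univ + ENNReal.ofReal C)) *
          ∫⁻ y, ‖g y‖ₑ ^ 2 ∂μ := by
  set D := 24 * volume (ball (0 : EuclideanSpace ℝ (Fin 3)) 1) * (μ univ + ENNReal.ofReal C)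
  obtain ⟨G, hG, hgG⟩ := hg.1.enorm
  have hG2 : ∫⁻ y, G y ^ 2 ∂μ = ∫⁻ y, ‖g y‖ₑ ^ 2 ∂μ :=
    lintegral_congr_ae (hgG.mono fun y (hy : ‖g y‖ₑ = G y) => by simp [hy])
  set H := fun x => 4 * ∫⁻ y, ‖x - y‖ₑ⁻¹ ^ 2 * G y ∂μ
  have hfH : ∀ x, ∫⁻ y, ‖phiFund m (x - y) *ᵥ g y‖ₑ ∂μ ≤ H x := fun x =>
    calc ∫⁻ y, ‖phiFund m (x - y) *ᵥ g y‖ₑ ∂μ ≤ ∫⁻ y, 4 * (‖x - y‖ₑ⁻¹ ^ 2 * ‖g y‖ₑ) ∂μ :=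
          lintegral_mono fun y => (enorm_phiFund_mulVec_le hm _ _).trans_eq (mul_assoc _ _ _)
      _ = ∫⁻ y, 4 * (‖x - y‖ₑ⁻¹ ^ 2 * G y) ∂μ :=
          lintegral_congr_ae (hgG.mono fun y (hy : ‖g y‖ₑ = G y) => by simp [hy])
      _ = H x := lintegral_const_mul _ (by fun_prop)
  have hH2 : ∫⁻ x, H x ^ 2 ≤ 32 * D * ∫⁻ y, G y ^ 2 ∂μ :=
    calc ∫⁻ x, H x ^ 2 = 4 ^ 2 * ∫⁻ x, (∫⁻ y, ‖x - y‖ₑ⁻¹ ^ 2 * G y ∂μ) ^ 2 := by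
          simp_rw [H, mul_pow]
          exact lintegral_const_mul _ (by fun_prop)
      _ ≤ 4 ^ 2 * (2 * D * ∫⁻ y, G y ^ 2 ∂μ) := by
          gcongr
          exact lintegral_sq_lintegral_enorm_sub_inv_sq_le finrank_euclideanSpace_fin volume
            hgrowth hG
      _ = 32 * D * ∫⁻ y, G y ^ 2 ∂μ := by ring
  obtain ⟨hint, hmem, hle⟩ := memLp_two_integral_of_lintegral_enorm_le
    (aemeasurable_phiFund_sub_mulVec volume μ m hg.1.aemeasurable).aestronglyMeasurable
    (by fun_prop) hfH (hH2.trans_lt (mul_lt_top (by finiteness)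
      (hG2 ▸ (memLp_two_iff_lintegral_enorm_sq_lt_top hg.1).1 hg))).ne
  exact ⟨hint, hmem, hle.trans (hH2.trans_eq (by rw [hG2]))⟩

theorem singleLayer_L2_bounded_general (m : ℝ) (hm : 0 < m)
    (μ : Measure (EuclideanSpace ℝ (Fin 3)))
    (S : Set (EuclideanSpace ℝ (Fin 3))) (hScompact : IsCompact S)
    (hSfull : μ Sᶜ = 0)
    (C : ℝ)
    (hgrowth : ∀ (x : EuclideanSpace ℝ (Fin 3)) (r : ℝ), 0 < r →
      μ (Metric.ball x r) ≤ ENNReal.ofReal (C * r ^ 2)) :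
    ∃ C' > 0, ∀ g : EuclideanSpace ℝ (Fin 3) → Fin 4 → ℂ, MemLp g 2 μ →
      (∀ᵐ x ∂(volume : Measure (EuclideanSpace ℝ (Fin 3))),
        Integrable (fun y => (phiFund m (x - y)).mulVec (g y)) μ) ∧
      MemLp (singleLayer m μ g) 2 volume ∧
      ∫ x, ‖singleLayer m μ g x‖ ^ 2 ≤ C' * ∫ y, ‖g y‖ ^ 2 ∂μ := by
  have := isFiniteMeasure_of_measure_ball_le hScompact.isBounded hSfull hgrowth
  set K := 32 * (24 * volume (ball (0 : EuclideanSpace ℝ (Fin 3)) 1) * (μ univ + ENNReal.ofReal C))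
  refine ⟨K.toReal + 1, by positivity, fun g hg => ?_⟩
  obtain ⟨hint, hmem, hle⟩ := singleLayer_memLp_two_of_measure_ball_le hm.le hgrowth hg
  refine ⟨hint, hmem, ?_⟩
  have hg2 := (memLp_two_iff_lintegral_enorm_sq_lt_top hg.1).1 hg
  rw [integral_norm_sq_eq_toReal_lintegral hmem.1, integral_norm_sq_eq_toReal_lintegral hg.1]
  calc (∫⁻ x, ‖singleLayer m μ g x‖ₑ ^ 2).toReal ≤ (K * ∫⁻ y, ‖g y‖ₑ ^ 2 ∂μ).toReal :=
        toReal_mono (mul_ne_top (by finiteness) hg2.ne) hle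
    _ ≤ (K.toReal + 1) * (∫⁻ y, ‖g y‖ₑ ^ 2 ∂μ).toReal := by
        rw [toReal_mul]
        gcongr
        linarith

/-- Let `m > 0` and let `μ` be a compactly supported Borel measure on `ℝ³` with two-dimensional
growth `μ(B(x,r)) ≤ C r²`.  Then there is `C' > 0` such that for every `g ∈ L²(μ; ℂ⁴)`, the
integral defining `Φg(x)` converges absolutely for Lebesgue-a.e. `x`, `Φg ∈ L²(ℝ³; ℂ⁴)`,
and `∫ |Φg|² dx ≤ C' ∫ |g|² dμ`. -/
theorem singleLayer_L2_bounded (m : ℝ) (hm : 0 < m)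
    (μ : Measure (EuclideanSpace ℝ (Fin 3)))
    (S : Set (EuclideanSpace ℝ (Fin 3))) (hSclosed : IsClosed S) (hScompact : IsCompact S)
    (hSfull : μ Sᶜ = 0)
    (C : ℝ) (hC : 0 < C)
    (hgrowth : ∀ (x : EuclideanSpace ℝ (Fin 3)) (r : ℝ), 0 < r →
      μ (Metric.ball x r) ≤ ENNReal.ofReal (C * r ^ 2)) :
    ∃ C' > 0, ∀ g : EuclideanSpace ℝ (Fin 3) → Fin 4 → ℂ, MemLp g 2 μ →
      (∀ᵐ x ∂(volume : Measure (EuclideanSpace ℝ (Fin 3))),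
        Integrable (fun y => (phiFund m (x - y)).mulVec (g y)) μ) ∧
      MemLp (singleLayer m μ g) 2 volume ∧
      ∫ x, ‖singleLayer m μ g x‖ ^ 2 ≤ C' * ∫ y, ‖g y‖ ^ 2 ∂μ :=
  singleLayer_L2_bounded_general m hm μ S hScompact hSfull C hgrowth
end

section
/- For every unit vector n ∈ ℝ³ and all τ, η ∈ ℝ, the 4×4 complex matrix i (α·n) + (1/2)(τ I₄ + η β) has determinant ( (4 + τ² − η²)/4 )². In particular this matrix is invertible if and only if η² − τ² ≠ 4, the confinement condition under which the δ-shell becomes impenetrable. -/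
open Matrix

/-!
Splitting `ℂ⁴ = ℂ² ⊕ ℂ²`, the matrix is `[[(τ+η)/2, i σ·n], [i σ·n, (τ-η)/2]]`. Its lower
right block is scalar, hence commutes with everything, so the Schur complement formula gives
`det = det ((τ²-η²)/4 - (i σ·n)²)`; and `(σ·n)² = |n|²` by the anticommutation of the Pauli
matrices, so the determinant is `(|n|² + (τ²-η²)/4)²`.
-/
theorem Matrix.det_fromBlocks_smul_one₂₂ {𝕜 n : Type*} [NontriviallyNormedField 𝕜]
    [Fintype n] [DecidableEq n] (A B C : Matrix n n 𝕜) (d : 𝕜) :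
    (fromBlocks A B C (d • 1)).det = (d • A - B * C).det := by
  have key : ∀ d : 𝕜, (fromBlocks A B C (d • 1)).det * d ^ Fintype.card n =
      (d • A - B * C).det * d ^ Fintype.card n := fun d => by
    have hmul : fromBlocks A B C (d • 1) * fromBlocks (d • 1) 0 (-C) 1 =
        fromBlocks (d • A - B * C) B 0 (d • 1) := by
      simp [fromBlocks_multiply, sub_eq_add_neg]
    have := congrArg det hmul
    rwa [det_mul, det_fromBlocks_zero₁₂, det_fromBlocks_zero₂₁, det_one, mul_one, det_smul,
      det_one, mul_one] at this
  have hf : Continuous fun d : 𝕜 => (fromBlocks A B C (d • 1)).det := by fun_prop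
  have hg : Continuous fun d : 𝕜 => (d • A - B * C).det := by fun_prop
  refine congrFun (hf.ext_on (dense_compl_singleton 0) hg fun d hd => ?_) d
  exact mul_right_cancel₀ (pow_ne_zero _ hd) (key d)

noncomputable def pauliDot (p : EuclideanSpace ℝ (Fin 3)) : Matrix (Fin 2) (Fin 2) ℂ :=
  ∑ j : Fin 3, (p j : ℂ) • pauli j

theorem pauliDot_mul_self (p : EuclideanSpace ℝ (Fin 3)) :
    pauliDot p * pauliDot p = ((‖p‖ ^ 2 : ℝ) : ℂ) • 1 := by
  have hp : ‖p‖ ^ 2 = p 0 ^ 2 + p 1 ^ 2 + p 2 ^ 2 := by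
    simp [EuclideanSpace.norm_sq_eq, Fin.sum_univ_three]
  rw [hp]
  ext i k
  fin_cases i <;> fin_cases k <;>
    simp [pauliDot, pauli, Fin.sum_univ_three, mul_apply] <;>
    first | linear_combination (-(p 1 : ℂ) ^ 2) * Complex.I_sq | ring

abbrev fromFin2Blocks :
    Matrix (Fin 2 ⊕ Fin 2) (Fin 2 ⊕ Fin 2) ℂ ≃ₗ[ℂ] Matrix (Fin 4) (Fin 4) ℂ :=
  reindexLinearEquiv ℂ ℂ finSumFinEquiv finSumFinEquiv

theorem diracAlpha_eq_fromBlocks (j : Fin 3) :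
    diracAlpha j = fromFin2Blocks (fromBlocks 0 (pauli j) (pauli j) 0) := by
  fin_cases j <;> ext i k <;> fin_cases i <;> fin_cases k <;> rfl

theorem diracBeta_eq_fromBlocks : diracBeta = fromFin2Blocks (fromBlocks 1 0 0 (-1)) := by
  ext i k
  -- the off-diagonal entries of `-1` are `-0`, which is not definitionally `0` in `ℂ`
  fin_cases i <;> fin_cases k <;> first | rfl | exact neg_zero.symm

theorem alphaDot_eq_fromBlocks (p : EuclideanSpace ℝ (Fin 3)) :
    alphaDot p = fromFin2Blocks (fromBlocks 0 (pauliDot p) (pauliDot p) 0) := by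
  simp only [alphaDot, pauliDot, Fin.sum_univ_three, diracAlpha_eq_fromBlocks, ← map_smul,
    ← map_add, fromBlocks_smul, fromBlocks_add, smul_zero, add_zero]

noncomputable def shellMatrix (p : EuclideanSpace ℝ (Fin 3)) (τ η : ℝ) :
    Matrix (Fin 4) (Fin 4) ℂ :=
  Complex.I • alphaDot p +
    (1 / 2 : ℂ) • ((τ : ℂ) • (1 : Matrix (Fin 4) (Fin 4) ℂ) + (η : ℂ) • diracBeta)

theorem shellMatrix_eq_fromBlocks (p : EuclideanSpace ℝ (Fin 3)) (τ η : ℝ) :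
    shellMatrix p τ η = fromFin2Blocks (fromBlocks (((τ + η) / 2 : ℂ) • 1)
      (Complex.I • pauliDot p) (Complex.I • pauliDot p) (((τ - η) / 2 : ℂ) • 1)) := by
  have h1 : (1 : Matrix (Fin 4) (Fin 4) ℂ) = fromFin2Blocks (fromBlocks 1 0 0 1) := by
    rw [fromBlocks_one, reindexLinearEquiv_one]
  rw [shellMatrix, alphaDot_eq_fromBlocks, diracBeta_eq_fromBlocks, h1]
  simp only [← map_smul, ← map_add, fromBlocks_smul, fromBlocks_add]
  congr 2 <;> module

theorem det_shellMatrix (p : EuclideanSpace ℝ (Fin 3)) (τ η : ℝ) :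
    (shellMatrix p τ η).det = ((‖p‖ ^ 2 + (τ ^ 2 - η ^ 2) / 4 : ℝ) : ℂ) ^ 2 := by
  have hschur : ((τ - η) / 2 : ℂ) • ((τ + η) / 2 : ℂ) • (1 : Matrix (Fin 2) (Fin 2) ℂ) -
      (Complex.I • pauliDot p) * (Complex.I • pauliDot p) =
      ((‖p‖ ^ 2 + (τ ^ 2 - η ^ 2) / 4 : ℝ) : ℂ) • 1 := by
    rw [smul_mul_smul_comm, Complex.I_mul_I, pauliDot_mul_self, smul_smul, neg_smul,
      one_smul, sub_neg_eq_add, ← add_smul]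
    congr 1
    push_cast
    ring
  rw [shellMatrix_eq_fromBlocks, coe_reindexLinearEquiv, det_reindex_self,
    det_fromBlocks_smul_one₂₂, hschur, det_smul, det_one, mul_one, Fintype.card_fin]

theorem isUnit_shellMatrix_iff (p : EuclideanSpace ℝ (Fin 3)) (τ η : ℝ) :
    IsUnit (shellMatrix p τ η) ↔ ‖p‖ ^ 2 + (τ ^ 2 - η ^ 2) / 4 ≠ 0 := by
  rw [isUnit_iff_isUnit_det, det_shellMatrix, isUnit_iff_ne_zero, pow_ne_zero_iff two_ne_zero,
    Complex.ofReal_ne_zero]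

/-- For a unit vector `n ∈ ℝ³` and `τ, η ∈ ℝ`, the transmission-condition matrix
`i (α·n) + (1/2)(τ I₄ + η β)` has determinant `((4 + τ² - η²)/4)²`; in particular it is
invertible if and only if `η² - τ² ≠ 4` (the confinement condition). -/
theorem shell_transmission_matrix_det (n : EuclideanSpace ℝ (Fin 3)) (hn : ‖n‖ = 1)
    (τ η : ℝ) :
    (Complex.I • alphaDot n +
        (1 / 2 : ℂ) • ((τ : ℂ) • (1 : Matrix (Fin 4) (Fin 4) ℂ) + (η : ℂ) • diracBeta)).det =
      (((4 + τ ^ 2 - η ^ 2) / 4 : ℝ) : ℂ) ^ 2 ∧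
    (IsUnit (Complex.I • alphaDot n +
        (1 / 2 : ℂ) • ((τ : ℂ) • (1 : Matrix (Fin 4) (Fin 4) ℂ) + (η : ℂ) • diracBeta)) ↔
      η ^ 2 - τ ^ 2 ≠ 4) := by
  have hc : ‖n‖ ^ 2 + (τ ^ 2 - η ^ 2) / 4 = (4 + τ ^ 2 - η ^ 2) / 4 := by
    rw [hn]; ring
  refine ⟨?_, ?_⟩
  · rw [← shellMatrix, det_shellMatrix, hc]
  · rw [← shellMatrix, isUnit_shellMatrix_iff, hc]
    exact not_congr ⟨fun h => by linarith, fun h => by linarith⟩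
end
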